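/- Let A and B be m×n complex matrices and E = B − A. Define δ′₁ := (‖E‖_F² − min{‖B‖₂²‖AA†EB†‖_F², ‖A‖₂²‖A†EB†B‖_F²}) / max{‖A‖₂⁴, ‖B‖₂⁴} and δ′₂ := (‖E‖_F² − min{‖A‖₂²‖BB†EA†‖_F², ‖B‖₂²‖B†EA†A‖_F²}) / max{‖A‖₂⁴, ‖B‖₂⁴}. Then ‖B† − A†‖_F² ≥ max{δ′₁ + ‖B†EA†‖_F², δ′₂ + ‖A†EB†‖_F²}. -/

import Mathlib

open Matrix

/-- The square of the Frobenius norm of a complex matrix. -/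
noncomputable def frobSq {α β : Type*} [Fintype α] [Fintype β] (M : Matrix α β ℂ) : ℝ :=
  ∑ i, ∑ j, ‖M i j‖ ^ 2

/-- The spectral norm (ℓ²-operator norm) of a complex matrix. -/
noncomputable def spec {α β : Type*} [Fintype α] [Fintype β] [DecidableEq β]
    (M : Matrix α β ℂ) : ℝ :=
  ‖LinearMap.toContinuousLinearMap (Matrix.toEuclideanLin M)‖

/-- `X` is the Moore–Penrose inverse of `M` (the four Penrose equations). -/
def IsMoorePenrose {α β : Type*} [Fintype α] [Fintype β]
    (M : Matrix α β ℂ) (X : Matrix β α ℂ) : Prop :=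
  M * X * M = M ∧ X * M * X = X ∧ (M * X)ᴴ = M * X ∧ (X * M)ᴴ = X * M

/-!
With the orthogonal projections `P = A A†` and `Q = B† B`, both
`B† - A† = -B† E A† + B† (1 - P) - (1 - Q) A†` and `E = P E Q - A (1 - Q) + (1 - P) B`
are sums of Frobenius-orthogonal terms. The Penrose equations give
`(1 - P) B = (B B† (1 - P))ᴴ B` and `A (1 - Q) = A ((1 - Q) A† A)ᴴ`, hence
`‖(1 - P) B‖_F² ≤ ‖B‖₂⁴ ‖B† (1 - P)‖_F²` and `‖A (1 - Q)‖_F² ≤ ‖A‖₂⁴ ‖(1 - Q) A†‖_F²`,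
while `‖P E Q‖_F²` is at most either term of the minimum. This is the first lower bound; the
second is the first one with `A` and `B` exchanged, which only flips the signs of `E` and
`B† - A†`.
-/

section Frobenius

variable {α β γ : Type*} [Fintype α] [Fintype β] [Fintype γ]

lemma frobSq_nonneg (M : Matrix α β ℂ) : 0 ≤ frobSq M := by
  unfold frobSq; positivity

@[simp]
lemma frobSq_neg (M : Matrix α β ℂ) : frobSq (-M) = frobSq M := by
  simp [frobSq]

@[simp]
lemma frobSq_conjTranspose (M : Matrix α β ℂ) : frobSq Mᴴ = frobSq M := by
  rw [frobSq, Finset.sum_comm]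
  simp [frobSq]

lemma frobSq_eq_re_trace (M : Matrix α β ℂ) : frobSq M = (trace (Mᴴ * M)).re := by
  simp only [trace, diag, mul_apply, conjTranspose_apply, Complex.re_sum]
  rw [frobSq, Finset.sum_comm]
  simp [Complex.conj_mul', ← Complex.ofReal_pow]

lemma frobSq_add_of_trace_eq_zero {X Y : Matrix α β ℂ} (h : trace (Xᴴ * Y) = 0) :
    frobSq (X + Y) = frobSq X + frobSq Y := by
  have h' : trace (Yᴴ * X) = 0 := by
    rw [← conjTranspose_conjTranspose X, ← conjTranspose_mul, trace_conjTranspose, h, star_zero]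
  simp only [frobSq_eq_re_trace, conjTranspose_add, Matrix.add_mul, Matrix.mul_add, trace_add,
    h, h', Complex.add_re, Complex.zero_re]
  ring

lemma trace_conjTranspose_mul_eq_zero_of_left {P : Matrix α α ℂ} (hP : P.IsHermitian)
    {X Y : Matrix α β ℂ} (hX : P * X = X) (hY : P * Y = 0) : trace (Xᴴ * Y) = 0 := by
  rw [← hX, conjTranspose_mul, hP.eq, Matrix.mul_assoc, hY, Matrix.mul_zero, trace_zero]

lemma trace_conjTranspose_mul_eq_zero_of_right {Q : Matrix β β ℂ} (hQ : Q.IsHermitian)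
    {X Y : Matrix α β ℂ} (hX : X * Q = X) (hY : Y * Q = 0) : trace (Xᴴ * Y) = 0 := by
  rw [trace_mul_comm, ← hX, conjTranspose_mul, hQ.eq, ← Matrix.mul_assoc, hY, Matrix.zero_mul,
    trace_zero]

lemma frobSq_eq_add_of_isStarProjection_left [DecidableEq α] {P : Matrix α α ℂ}
    (hP : IsStarProjection P) (X : Matrix α β ℂ) :
    frobSq X = frobSq (P * X) + frobSq ((1 - P) * X) := by
  rw [← frobSq_add_of_trace_eq_zero, ← Matrix.add_mul, add_sub_cancel, Matrix.one_mul]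
  refine trace_conjTranspose_mul_eq_zero_of_left hP.isSelfAdjoint.isHermitian ?_ ?_
  · rw [← Matrix.mul_assoc, hP.isIdempotentElem.eq]
  · rw [← Matrix.mul_assoc, hP.isIdempotentElem.mul_one_sub_self, Matrix.zero_mul]

lemma frobSq_eq_add_of_isStarProjection_right [DecidableEq β] {Q : Matrix β β ℂ}
    (hQ : IsStarProjection Q) (X : Matrix α β ℂ) :
    frobSq X = frobSq (X * Q) + frobSq (X * (1 - Q)) := by
  rw [← frobSq_add_of_trace_eq_zero, ← Matrix.mul_add, add_sub_cancel, Matrix.mul_one]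
  refine trace_conjTranspose_mul_eq_zero_of_right hQ.isSelfAdjoint.isHermitian ?_ ?_
  · rw [Matrix.mul_assoc, hQ.isIdempotentElem.eq]
  · rw [Matrix.mul_assoc, hQ.isIdempotentElem.one_sub_mul_self, Matrix.mul_zero]

end Frobenius

section Spectral

open scoped Matrix.Norms.L2Operator

variable {α β γ : Type*} [Fintype α] [Fintype β] [Fintype γ]

@[simp]
lemma spec_conjTranspose [DecidableEq α] [DecidableEq β] (M : Matrix α β ℂ) :
    spec Mᴴ = spec M :=
  l2_opNorm_conjTranspose M

lemma frobSq_eq_sum_norm_sq_col (X : Matrix β γ ℂ) :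
    frobSq X = ∑ j, ‖WithLp.toLp 2 (fun i ↦ X i j)‖ ^ 2 := by
  simp only [EuclideanSpace.norm_sq_eq]
  exact Finset.sum_comm

lemma frobSq_mul_le_spec_sq_mul [DecidableEq β] (M : Matrix α β ℂ) (X : Matrix β γ ℂ) :
    frobSq (M * X) ≤ spec M ^ 2 * frobSq X := by
  rw [frobSq_eq_sum_norm_sq_col, frobSq_eq_sum_norm_sq_col, Finset.mul_sum]
  gcongr with j
  rw [← mul_pow]
  gcongr
  exact l2_opNorm_mulVec M (WithLp.toLp 2 (fun i ↦ X i j))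

lemma frobSq_mul_le_mul_spec_sq [DecidableEq β] [DecidableEq γ] (X : Matrix α β ℂ)
    (M : Matrix β γ ℂ) : frobSq (X * M) ≤ frobSq X * spec M ^ 2 := by
  rw [← frobSq_conjTranspose, conjTranspose_mul, ← spec_conjTranspose M, mul_comm,
    ← frobSq_conjTranspose X]
  exact frobSq_mul_le_spec_sq_mul _ _

end Spectral

namespace IsMoorePenrose

variable {α β : Type*} [Fintype α] [Fintype β] {A B : Matrix α β ℂ}
  {Adag Bdag : Matrix β α ℂ}

lemma conjTranspose (hA : IsMoorePenrose A Adag) : IsMoorePenrose Aᴴ Adagᴴ := by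
  obtain ⟨h₁, h₂, h₃, h₄⟩ := hA
  refine ⟨?_, ?_, ?_, ?_⟩
  · rw [← conjTranspose_mul, ← conjTranspose_mul, ← Matrix.mul_assoc, h₁]
  · rw [← conjTranspose_mul, ← conjTranspose_mul, ← Matrix.mul_assoc, h₂]
  · rw [← conjTranspose_mul, h₄, h₄]
  · rw [← conjTranspose_mul, h₃, h₃]

lemma isStarProjection_mul_pinv (hA : IsMoorePenrose A Adag) : IsStarProjection (A * Adag) :=
  ⟨by rw [IsIdempotentElem, ← Matrix.mul_assoc, hA.1], hA.2.2.1⟩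

lemma isStarProjection_pinv_mul (hA : IsMoorePenrose A Adag) : IsStarProjection (Adag * A) :=
  ⟨by rw [IsIdempotentElem, ← Matrix.mul_assoc, hA.2.1], hA.2.2.2⟩

variable [DecidableEq α] [DecidableEq β]

theorem frobSq_pinv_sub_pinv_eq (hA : IsMoorePenrose A Adag) (hB : IsMoorePenrose B Bdag) :
    frobSq (Bdag - Adag) = frobSq (Bdag * (B - A) * Adag) + frobSq (Bdag * (1 - A * Adag))
      + frobSq ((1 - Bdag * B) * Adag) := by
  have hP := hA.isStarProjection_mul_pinv
  have hQ := hB.isStarProjection_pinv_mul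
  have hdecomp : Bdag - Adag = (-(Bdag * (B - A) * Adag) + Bdag * (1 - A * Adag))
      + -((1 - Bdag * B) * Adag) := by
    simp only [Matrix.mul_sub, Matrix.sub_mul, Matrix.mul_one, Matrix.one_mul, Matrix.mul_assoc]
    abel
  rw [hdecomp, frobSq_add_of_trace_eq_zero, frobSq_add_of_trace_eq_zero, frobSq_neg, frobSq_neg]
  · refine trace_conjTranspose_mul_eq_zero_of_right hP.isSelfAdjoint.isHermitian ?_ ?_
    · rw [Matrix.neg_mul, Matrix.mul_assoc _ Adag, ← Matrix.mul_assoc Adag, hA.2.1]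
    · rw [Matrix.mul_assoc, hP.isIdempotentElem.one_sub_mul_self, Matrix.mul_zero]
  · refine trace_conjTranspose_mul_eq_zero_of_left hQ.isSelfAdjoint.isHermitian ?_ ?_
    · simp only [Matrix.mul_add, Matrix.mul_neg, ← Matrix.mul_assoc, hB.2.1]
    · rw [Matrix.mul_neg, ← Matrix.mul_assoc, hQ.isIdempotentElem.mul_one_sub_self,
        Matrix.zero_mul, neg_zero]

theorem frobSq_sub_eq (hA : IsMoorePenrose A Adag) (hB : IsMoorePenrose B Bdag) :
    frobSq (B - A) = frobSq (A * Adag * (B - A) * (Bdag * B)) + frobSq (A * (1 - Bdag * B))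
      + frobSq ((1 - A * Adag) * B) := by
  have hPA : (1 - A * Adag) * A = 0 := by
    rw [Matrix.sub_mul, Matrix.one_mul, hA.1, sub_self]
  have hBQ : B * (1 - Bdag * B) = 0 := by
    rw [Matrix.mul_sub, Matrix.mul_one, ← Matrix.mul_assoc, hB.1, sub_self]
  have hAperp : (1 - A * Adag) * (B - A) = (1 - A * Adag) * B := by
    rw [Matrix.mul_sub, hPA, sub_zero]
  have hBperp : A * Adag * (B - A) * (1 - Bdag * B) = -(A * (1 - Bdag * B)) := by
    rw [Matrix.mul_sub (A * Adag), hA.1, Matrix.sub_mul, Matrix.mul_assoc (A * Adag) B, hBQ,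
      Matrix.mul_zero, zero_sub]
  rw [frobSq_eq_add_of_isStarProjection_left hA.isStarProjection_mul_pinv,
    frobSq_eq_add_of_isStarProjection_right hB.isStarProjection_pinv_mul, hAperp, hBperp,
    frobSq_neg]

theorem frobSq_hermitian_mul_le (hB : IsMoorePenrose B Bdag) {P : Matrix α α ℂ}
    (hP : P.IsHermitian) : frobSq (P * B) ≤ spec B ^ 4 * frobSq (Bdag * P) := by
  have hPB : P * B = (B * (Bdag * P))ᴴ * B := by
    rw [conjTranspose_mul, conjTranspose_mul, hP.eq, Matrix.mul_assoc P,
      ← conjTranspose_mul, hB.2.2.1, Matrix.mul_assoc P, hB.1]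
  calc frobSq (P * B) ≤ frobSq (B * (Bdag * P)) * spec B ^ 2 := by
        simpa only [hPB, frobSq_conjTranspose] using
          frobSq_mul_le_mul_spec_sq (B * (Bdag * P))ᴴ B
    _ ≤ spec B ^ 2 * frobSq (Bdag * P) * spec B ^ 2 := by
        gcongr; exact frobSq_mul_le_spec_sq_mul _ _
    _ = spec B ^ 4 * frobSq (Bdag * P) := by ring

theorem frobSq_mul_hermitian_le (hA : IsMoorePenrose A Adag) {Q : Matrix β β ℂ}
    (hQ : Q.IsHermitian) : frobSq (A * Q) ≤ spec A ^ 4 * frobSq (Q * Adag) := by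
  rw [← frobSq_conjTranspose (A * Q), ← frobSq_conjTranspose (Q * Adag), conjTranspose_mul,
    conjTranspose_mul, hQ.eq, ← spec_conjTranspose A]
  exact hA.conjTranspose.frobSq_hermitian_mul_le hQ

theorem le_frobSq_pinv_sub_pinv (hA : IsMoorePenrose A Adag) (hB : IsMoorePenrose B Bdag) :
    (frobSq (B - A) - min (spec B ^ 2 * frobSq (A * Adag * (B - A) * Bdag))
        (spec A ^ 2 * frobSq (Adag * (B - A) * Bdag * B))) / max (spec A ^ 4) (spec B ^ 4)
      + frobSq (Bdag * (B - A) * Adag) ≤ frobSq (Bdag - Adag) := by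
  have hmin : frobSq (A * Adag * (B - A) * (Bdag * B)) ≤
      min (spec B ^ 2 * frobSq (A * Adag * (B - A) * Bdag))
        (spec A ^ 2 * frobSq (Adag * (B - A) * Bdag * B)) := by
    refine le_min ?_ ?_
    · rw [← Matrix.mul_assoc, mul_comm]
      exact frobSq_mul_le_mul_spec_sq _ B
    · simp only [Matrix.mul_assoc]
      exact frobSq_mul_le_spec_sq_mul A _
  have hBoff := hB.frobSq_hermitian_mul_le
    hA.isStarProjection_mul_pinv.one_sub.isSelfAdjoint.isHermitian
  have hAoff := hA.frobSq_mul_hermitian_le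
    hB.isStarProjection_pinv_mul.one_sub.isSelfAdjoint.isHermitian
  have hK₁ := mul_le_mul_of_nonneg_right (le_max_left (spec A ^ 4) (spec B ^ 4))
    (frobSq_nonneg ((1 - Bdag * B) * Adag))
  have hK₂ := mul_le_mul_of_nonneg_right (le_max_right (spec A ^ 4) (spec B ^ 4))
    (frobSq_nonneg (Bdag * (1 - A * Adag)))
  have hdiv : (frobSq (B - A) - min (spec B ^ 2 * frobSq (A * Adag * (B - A) * Bdag))
        (spec A ^ 2 * frobSq (Adag * (B - A) * Bdag * B))) / max (spec A ^ 4) (spec B ^ 4)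
      ≤ frobSq (Bdag * (1 - A * Adag)) + frobSq ((1 - Bdag * B) * Adag) := by
    -- `div_le_of_le_mul₀` also covers a vanishing denominator, where the quotient is junk `0`.
    refine div_le_of_le_mul₀ (by positivity) (add_nonneg (frobSq_nonneg _) (frobSq_nonneg _)) ?_
    linarith [hA.frobSq_sub_eq hB]
  linarith [hA.frobSq_pinv_sub_pinv_eq hB]

end IsMoorePenrose

theorem stmt10_general {m n : ℕ}
    (A B : Matrix (Fin m) (Fin n) ℂ)
    (Adag Bdag : Matrix (Fin n) (Fin m) ℂ)
    (hA : IsMoorePenrose A Adag) (hB : IsMoorePenrose B Bdag)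
    (E : Matrix (Fin m) (Fin n) ℂ) (hE : E = B - A)
    :
    frobSq (Bdag - Adag) ≥
      max
        ((frobSq E - min (spec B ^ 2 * frobSq (A * Adag * E * Bdag))
              (spec A ^ 2 * frobSq (Adag * E * Bdag * B)))
            / max (spec A ^ 4) (spec B ^ 4)
          + frobSq (Bdag * E * Adag))
        ((frobSq E - min (spec A ^ 2 * frobSq (B * Bdag * E * Adag))
              (spec B ^ 2 * frobSq (Bdag * E * Adag * A)))
            / max (spec A ^ 4) (spec B ^ 4)
          + frobSq (Adag * E * Bdag)) := by
  subst hE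
  refine max_le (hA.le_frobSq_pinv_sub_pinv hB) ?_
  have h := hB.le_frobSq_pinv_sub_pinv hA
  rw [← neg_sub B A, ← neg_sub Bdag Adag, max_comm] at h
  simpa only [Matrix.mul_neg, Matrix.neg_mul, frobSq_neg] using h

theorem stmt10 {m n : ℕ}
    (A B : Matrix (Fin m) (Fin n) ℂ)
    (Adag Bdag : Matrix (Fin n) (Fin m) ℂ)
    (hA : IsMoorePenrose A Adag) (hB : IsMoorePenrose B Bdag)
    (E : Matrix (Fin m) (Fin n) ℂ) (hE : E = B - A)
    (hA0 : A ≠ 0) (hB0 : B ≠ 0)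
    :
    frobSq (Bdag - Adag) ≥
      max
        ((frobSq E - min (spec B ^ 2 * frobSq (A * Adag * E * Bdag))
              (spec A ^ 2 * frobSq (Adag * E * Bdag * B)))
            / max (spec A ^ 4) (spec B ^ 4)
          + frobSq (Bdag * E * Adag))
        ((frobSq E - min (spec A ^ 2 * frobSq (B * Bdag * E * Adag))
              (spec B ^ 2 * frobSq (Bdag * E * Adag * A)))
            / max (spec A ^ 4) (spec B ^ 4)
          + frobSq (Adag * E * Bdag)) :=
  stmt10_general A B Adag Bdag hA hB E hE
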